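/- With E, F, and h : X_E → X_F as defined, the identities σ_F^2(h(x)) = σ_F(h(σ_E(x))) for all x ∈ X_E and σ_E^2(h^{-1}(y)) = σ_E(h^{-1}(σ_F(y))) for all y ∈ X_F hold; consequently (X_E, σ_E) and (X_F, σ_F) are eventually conjugate with lag L = 1. -/
import Mathlib


/-- The common vertex set `{u, v, w}` of the graphs `E` and `F`. -/
inductive Vert | u | v | w
  deriving DecidableEq

/-- The edges of the graph `E`: `a : u→v`, `c d : v→u`, `b : w→v`, `e f : v→w`. -/
inductive EEdge | a | b | c | d | e | f
  deriving DecidableEq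

/-- The edges of the graph `F`: `a' : u→v`, `c' d' : v→u`, `b' : w→v`,
`e' : v→u`, `f' : v→w`. -/
inductive FEdge | a' | b' | c' | d' | e' | f'
  deriving DecidableEq

instance : TopologicalSpace EEdge := ⊥
instance : DiscreteTopology EEdge := ⟨rfl⟩
instance : TopologicalSpace FEdge := ⊥
instance : DiscreteTopology FEdge := ⟨rfl⟩

def srcE : EEdge → Vert
  | .a => .u | .c => .v | .d => .v | .b => .w | .e => .v | .f => .v

def rngE : EEdge → Vert
  | .a => .v | .c => .u | .d => .u | .b => .v | .e => .w | .f => .w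

def srcF : FEdge → Vert
  | .a' => .u | .c' => .v | .d' => .v | .b' => .w | .e' => .v | .f' => .v

def rngF : FEdge → Vert
  | .a' => .v | .c' => .u | .d' => .u | .b' => .v | .e' => .u | .f' => .w

/-- The one-sided edge shift of `E`. -/
def XE : Set (ℕ → EEdge) := {x | ∀ n : ℕ, rngE (x n) = srcE (x (n + 1))}

/-- The one-sided edge shift of `F`. -/
def XF : Set (ℕ → FEdge) := {x | ∀ n : ℕ, rngF (x n) = srcF (x (n + 1))}

/-- The shift map on one-sided sequences. -/
def sh {α : Type} (x : ℕ → α) : ℕ → α := fun n => x (n + 1)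

/-- The priming map sending each edge of `E` to the correspondingly named
edge of `F`. -/
def primed : EEdge → FEdge
  | .a => .a' | .b => .b' | .c => .c' | .d => .d' | .e => .e' | .f => .f'

/-- The map `h : X_E → X_F`: `y_n = a'` if `n > 0` and `x_{n-1} = e`, and
`y_n = (x_n)'` otherwise. -/
def hmap (x : ℕ → EEdge) : ℕ → FEdge
  | 0 => primed (x 0)
  | n + 1 => if x n = EEdge.e then FEdge.a' else primed (x (n + 1))

/-- The unpriming map, inverse to `primed`. -/
def unprimed : FEdge → EEdge
  | .a' => .a | .b' => .b | .c' => .c | .d' => .d | .e' => .e | .f' => .f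

/-- The inverse map `h⁻¹ : X_F → X_E`. -/
def hinv (y : ℕ → FEdge) : ℕ → EEdge
  | 0 => unprimed (y 0)
  | n + 1 => if y n = FEdge.e' then EEdge.b else unprimed (y (n + 1))

/-- The shift map of `E` lifted to the subtype `X_E`. -/
def shE (x : XE) : XE := ⟨sh x.1, fun n => x.2 (n + 1)⟩

/-- The shift map of `F` lifted to the subtype `X_F`. -/
def shF (y : XF) : XF := ⟨sh y.1, fun n => y.2 (n + 1)⟩

lemma forcedE {x : ℕ → EEdge} (hx : x ∈ XE) {n : ℕ} (h : x n = EEdge.e) :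
    x (n + 1) = EEdge.b := by
  have h2 := hx n
  rw [h] at h2
  cases h3 : x (n + 1) <;> rw [h3] at h2 <;> simp_all [rngE, srcE]

lemma forcedF {y : ℕ → FEdge} (hy : y ∈ XF) {n : ℕ} (h : y n = FEdge.e') :
    y (n + 1) = FEdge.a' := by
  have h2 := hy n
  rw [h] at h2
  cases h3 : y (n + 1) <;> rw [h3] at h2 <;> simp_all [rngF, srcF]

lemma srcF_primed (t : EEdge) : srcF (primed t) = srcE t := by cases t <;> rfl

lemma rngF_primed {t : EEdge} (h : t ≠ EEdge.e) : rngF (primed t) = rngE t := by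
  cases t <;> simp_all <;> rfl

lemma srcE_unprimed (t : FEdge) : srcE (unprimed t) = srcF t := by cases t <;> rfl

lemma rngE_unprimed {t : FEdge} (h : t ≠ FEdge.e') : rngE (unprimed t) = rngF t := by
  cases t <;> simp_all <;> rfl

lemma unprimed_primed (t : EEdge) : unprimed (primed t) = t := by cases t <;> rfl

lemma primed_unprimed (t : FEdge) : primed (unprimed t) = t := by cases t <;> rfl

lemma hmap_mem {x : ℕ → EEdge} (hx : x ∈ XE) : hmap x ∈ XF := by
  intro n
  match n with
  | 0 =>
    show rngF (primed (x 0)) = srcF (if x 0 = EEdge.e then FEdge.a' else primed (x 1))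
    by_cases h : x 0 = EEdge.e
    · rw [h]; rfl
    · rw [if_neg h, rngF_primed h, srcF_primed, hx 0]
  | n + 1 =>
    show rngF (if x n = EEdge.e then FEdge.a' else primed (x (n+1)))
        = srcF (if x (n+1) = EEdge.e then FEdge.a' else primed (x (n+2)))
    by_cases h : x n = EEdge.e
    · have hb := forcedE hx h
      rw [if_pos h, if_neg (by rw [hb]; simp), srcF_primed, ← hx (n+1), hb]
      rfl
    · rw [if_neg h]
      by_cases h2 : x (n+1) = EEdge.e
      · rw [if_pos h2, h2]; rfl
      · rw [if_neg h2, rngF_primed h2, srcF_primed, hx (n+1)]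

lemma hinv_mem {y : ℕ → FEdge} (hy : y ∈ XF) : hinv y ∈ XE := by
  intro n
  match n with
  | 0 =>
    show rngE (unprimed (y 0)) = srcE (if y 0 = FEdge.e' then EEdge.b else unprimed (y 1))
    by_cases h : y 0 = FEdge.e'
    · rw [h]; simp [unprimed, rngE, srcE]
    · rw [if_neg h, rngE_unprimed h, srcE_unprimed, hy 0]
  | n + 1 =>
    show rngE (if y n = FEdge.e' then EEdge.b else unprimed (y (n+1)))
        = srcE (if y (n+1) = FEdge.e' then EEdge.b else unprimed (y (n+2)))
    by_cases h : y n = FEdge.e'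
    · have ha := forcedF hy h
      rw [if_pos h, if_neg (by rw [ha]; simp), srcE_unprimed, ← hy (n+1), ha]
      rfl
    · rw [if_neg h]
      by_cases h2 : y (n+1) = FEdge.e'
      · rw [if_pos h2, h2]; rfl
      · rw [if_neg h2, rngE_unprimed h2, srcE_unprimed, hy (n+1)]

lemma hmap_eq_e' {x : ℕ → EEdge} (hx : x ∈ XE) (n : ℕ) :
    hmap x n = FEdge.e' ↔ x n = EEdge.e := by
  match n with
  | 0 =>
    show primed (x 0) = FEdge.e' ↔ _
    cases h : x 0 <;> simp [primed]
  | n + 1 =>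
    show (if x n = EEdge.e then FEdge.a' else primed (x (n+1))) = FEdge.e' ↔ _
    by_cases h : x n = EEdge.e
    · rw [if_pos h]
      have := forcedE hx h
      simp [this]
    · rw [if_neg h]
      cases h2 : x (n+1) <;> simp [primed]

lemma hinv_eq_e {y : ℕ → FEdge} (hy : y ∈ XF) (n : ℕ) :
    hinv y n = EEdge.e ↔ y n = FEdge.e' := by
  match n with
  | 0 =>
    show unprimed (y 0) = EEdge.e ↔ _
    cases h : y 0 <;> simp [unprimed]
  | n + 1 =>
    show (if y n = FEdge.e' then EEdge.b else unprimed (y (n+1))) = EEdge.e ↔ _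
    by_cases h : y n = FEdge.e'
    · rw [if_pos h]
      have := forcedF hy h
      simp [this]
    · rw [if_neg h]
      cases h2 : y (n+1) <;> simp [unprimed]

lemma hinv_hmap {x : ℕ → EEdge} (hx : x ∈ XE) : hinv (hmap x) = x := by
  funext n
  match n with
  | 0 => exact unprimed_primed (x 0)
  | n + 1 =>
    show (if hmap x n = FEdge.e' then EEdge.b else unprimed (hmap x (n+1))) = x (n+1)
    by_cases h : hmap x n = FEdge.e'
    · rw [if_pos h, forcedE hx ((hmap_eq_e' hx n).mp h)]
    · rw [if_neg h]
      have hne : x n ≠ EEdge.e := fun hc => h ((hmap_eq_e' hx n).mpr hc)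
      show unprimed (if x n = EEdge.e then FEdge.a' else primed (x (n+1))) = x (n+1)
      rw [if_neg hne, unprimed_primed]

lemma hmap_hinv {y : ℕ → FEdge} (hy : y ∈ XF) : hmap (hinv y) = y := by
  funext n
  match n with
  | 0 => exact primed_unprimed (y 0)
  | n + 1 =>
    show (if hinv y n = EEdge.e then FEdge.a' else primed (hinv y (n+1))) = y (n+1)
    by_cases h : hinv y n = EEdge.e
    · rw [if_pos h, forcedF hy ((hinv_eq_e hy n).mp h)]
    · rw [if_neg h]
      have hne : y n ≠ FEdge.e' := fun hc => h ((hinv_eq_e hy n).mpr hc)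
      show primed (if y n = FEdge.e' then EEdge.b else unprimed (y (n+1))) = y (n+1)
      rw [if_neg hne, primed_unprimed]

lemma hmap_continuous : Continuous (hmap : (ℕ → EEdge) → (ℕ → FEdge)) := by
  apply continuous_pi
  intro n
  match n with
  | 0 =>
    have : (fun x : ℕ → EEdge => hmap x 0) = primed ∘ (fun x => x 0) := rfl
    rw [this]
    exact Continuous.comp continuous_of_discreteTopology (continuous_apply 0)
  | n + 1 =>
    have : (fun x : ℕ → EEdge => hmap x (n+1)) =
        (fun p : EEdge × EEdge => if p.1 = EEdge.e then FEdge.a' else primed p.2) ∘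
          (fun x => (x n, x (n+1))) := rfl
    rw [this]
    exact Continuous.comp continuous_of_discreteTopology
      ((continuous_apply n).prodMk (continuous_apply (n+1)))

lemma hinv_continuous : Continuous (hinv : (ℕ → FEdge) → (ℕ → EEdge)) := by
  apply continuous_pi
  intro n
  match n with
  | 0 =>
    have : (fun y : ℕ → FEdge => hinv y 0) = unprimed ∘ (fun y => y 0) := rfl
    rw [this]
    exact Continuous.comp continuous_of_discreteTopology (continuous_apply 0)
  | n + 1 =>
    have : (fun y : ℕ → FEdge => hinv y (n+1)) =
        (fun p : FEdge × FEdge => if p.1 = FEdge.e' then EEdge.b else unprimed p.2) ∘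
          (fun y => (y n, y (n+1))) := rfl
    rw [this]
    exact Continuous.comp continuous_of_discreteTopology
      ((continuous_apply n).prodMk (continuous_apply (n+1)))

/-- The homeomorphism `h : X_E ≃ₜ X_F`. -/
def hHomeo : XE ≃ₜ XF where
  toFun x := ⟨hmap x.1, hmap_mem x.2⟩
  invFun y := ⟨hinv y.1, hinv_mem y.2⟩
  left_inv x := Subtype.ext (hinv_hmap x.2)
  right_inv y := Subtype.ext (hmap_hinv y.2)
  continuous_toFun := Continuous.subtype_mk (hmap_continuous.comp continuous_subtype_val) _
  continuous_invFun := Continuous.subtype_mk (hinv_continuous.comp continuous_subtype_val) _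

/-- The identities `σ_F²(h(x)) = σ_F(h(σ_E(x)))` and
`σ_E²(h⁻¹(y)) = σ_E(h⁻¹(σ_F(y)))` hold; consequently `(X_E, σ_E)` and
`(X_F, σ_F)` are eventually conjugate with lag `L = 1`. -/
theorem hmap_eventual_conjugacy :
    (∀ x ∈ XE, sh (sh (hmap x)) = sh (hmap (sh x))) ∧
    (∀ y ∈ XF, sh (sh (hinv y)) = sh (hinv (sh y))) ∧
    ∃ h : XE ≃ₜ XF,
      (∀ x : XE, shF (h (shE x)) = shF (shF (h x))) ∧
      (∀ y : XF, shE (h.symm (shF y)) = shE (shE (h.symm y))) := by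
  refine ⟨fun x _ => funext fun n => rfl, fun y _ => funext fun n => rfl,
    hHomeo, fun x => ?_, fun y => ?_⟩
  · exact Subtype.ext (funext fun n => rfl)
  · exact Subtype.ext (funext fun n => rfl)
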